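/- arXiv:2512.22718 — 5 statements merged into one kernel-verified Lean document; each statement's English description precedes it below -/
import Mathlib

section
/- Assume in addition that K has characteristic zero. Then, as linear maps Φ_0 → Φ_{r+1}, one has ∑_{s=0}^{r} (1/(s+1)) · ∑_{1 ≤ i_1 < i_2 < ⋯ < i_s ≤ r} M⁺(i_s, r+1) ∘ M⁺(i_{s−1}, i_s) ∘ ⋯ ∘ M⁺(0, i_1) = ∑_{ε ∈ {+,−}^r} (|+(ε)|! · |−(ε)|! / (r+1)!) · m^ε, where the s = 0 term of the left-hand side is M⁺(0, r+1). (This is Kapranov–Soibelman's Proposition on the Écalle-type expression of the alien derivative transport as a positive convex combination of the rectilinear transports with avoidances; e.g. for r = 1 it reads M⁺(0,2) + (1/2)·M(1,2,∅)∘M(0,1,∅) = (1/2)m^{+} + (1/2)m^{−}.) -/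
/-- Composite of transports with the constant sign pattern `b` along a chain
`start → i₁ → ⋯ → i_s → top`, where the list holds the intermediate points
`i₁ < ⋯ < i_s`: it equals `M(i_s, top, b) ∘ ⋯ ∘ M(i₁, i₂, b) ∘ M(start, i₁, b)`. -/
def chainComp {K : Type*} [Field K] {Φ : ℕ → Type*}
    [∀ n, AddCommGroup (Φ n)] [∀ n, Module K (Φ n)]
    (M : ∀ i j : ℕ, (ℕ → Bool) → (Φ i →ₗ[K] Φ j)) (b : Bool) (top : ℕ) :
    (start : ℕ) → List ℕ → (Φ start →ₗ[K] Φ top)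
  | start, [] => M start top (fun _ => b)
  | start, i :: l => (chainComp M b top i l).comp (M start i (fun _ => b))

open Finset

/-- The key combinatorial identity, in ℕ. -/
lemma ks_key_nat (s m : ℕ) :
    (s + 1) * ∑ p ∈ Finset.range (m + 1),
      m.choose p * (p.factorial * ((s + m) - p).factorial) = (s + m + 1).factorial := by
  have hterm : ∀ p ∈ Finset.range (m + 1),
      m.choose p * (p.factorial * ((s + m) - p).factorial)
        = m.factorial * s.factorial * (s + (m - p)).choose s := by
    intro p hp
    rw [Finset.mem_range, Nat.lt_succ_iff] at hp
    have h1 : s + m - p = s + (m - p) := by omega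
    have h2 : (s + (m - p)).choose s * s.factorial * (m - p).factorial
        = (s + (m - p)).factorial := by
      have := Nat.choose_mul_factorial_mul_factorial (Nat.le_add_right s (m - p))
      simpa using this
    have h3 : m.choose p * p.factorial * (m - p).factorial = m.factorial :=
      Nat.choose_mul_factorial_mul_factorial hp
    rw [h1, ← h2, ← h3]
    ring
  rw [Finset.sum_congr rfl hterm, ← Finset.mul_sum]
  have hreflect : ∑ p ∈ Finset.range (m + 1), (s + (m - p)).choose s
      = ∑ p ∈ Finset.range (m + 1), (s + p).choose s := by
    have := Finset.sum_range_reflect (fun p => (s + p).choose s) (m + 1)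
    simpa using this
  rw [hreflect]
  have hhs : ∑ p ∈ Finset.range (m + 1), (s + p).choose s = (s + m + 1).choose (s + 1) := by
    have h := Nat.sum_Icc_choose (s + m) s
    rw [← h]
    have hmap : Finset.Icc s (s + m) = (Finset.range (m + 1)).map (addLeftEmbedding s) := by
      rw [Finset.range_eq_Ico, Finset.map_add_left_Ico, ← Finset.Ico_add_one_right_eq_Icc]
      congr 1
    rw [hmap, Finset.sum_map]
    exact Finset.sum_congr rfl fun p _ => rfl
  rw [hhs]
  have := Nat.choose_mul_factorial_mul_factorial
    (show s + 1 ≤ s + m + 1 by omega)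
  have hsub : s + m + 1 - (s + 1) = m := by omega
  rw [hsub] at this
  calc (s + 1) * (m.factorial * s.factorial * (s + m + 1).choose (s + 1))
      = (s + m + 1).choose (s + 1) * ((s + 1) * s.factorial) * m.factorial := by ring
    _ = (s + m + 1).choose (s + 1) * (s + 1).factorial * m.factorial := by
        rw [Nat.factorial_succ]
    _ = (s + m + 1).factorial := this

/-- The key combinatorial identity, in a field of characteristic zero. -/
lemma ks_key_field {K : Type*} [Field K] [CharZero K] (r s : ℕ) (hs : s ≤ r)
    (T : Finset ℕ) (hT : T.card = r - s) :
    ∑ P ∈ T.powerset,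
        ((P.card.factorial : K) * ((r - P.card).factorial : K)) / ((r + 1).factorial : K)
      = ((s : K) + 1)⁻¹ := by
  set m := r - s with hm
  have hr : s + m = r := by omega
  rw [Finset.sum_powerset_apply_card
    (f := fun p => ((p.factorial : K) * ((r - p).factorial : K)) / ((r + 1).factorial : K))]
  rw [hT]
  have hnat := ks_key_nat s m
  rw [hr] at hnat
  have hcast : ((s : K) + 1) * ((∑ p ∈ Finset.range (m + 1),
      m.choose p * (p.factorial * (r - p).factorial) : ℕ) : K)
      = ((r + 1).factorial : K) := by
    rw [← hnat]; push_cast; ring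
  have hfac : ((r + 1).factorial : K) ≠ 0 := Nat.cast_ne_zero.2 (Nat.factorial_ne_zero _)
  have hs1 : ((s : K) + 1) ≠ 0 := by
    exact_mod_cast (Nat.cast_ne_zero (R := K)).2 (Nat.succ_ne_zero s)
  simp only [nsmul_eq_mul]
  have hsum : (∑ p ∈ Finset.range (m + 1), (m.choose p : K) *
      ((p.factorial : K) * ((r - p).factorial : K) / ((r + 1).factorial : K)))
      = ((∑ p ∈ Finset.range (m + 1),
          m.choose p * (p.factorial * (r - p).factorial) : ℕ) : K) / ((r + 1).factorial : K) := by
    push_cast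
    rw [Finset.sum_div]
    exact Finset.sum_congr rfl fun p _ => by ring
  rw [hsum]
  rw [div_eq_iff hfac, eq_inv_mul_iff_mul_eq₀ hs1]
  exact hcast

/-- Expansion of a transport with mixed signs into all-plus chains, by iterated
Picard–Lefschetz. -/
lemma ks_expand {K : Type*} [Field K] (r : ℕ) {Φ : ℕ → Type*}
    [∀ n, AddCommGroup (Φ n)] [∀ n, Module K (Φ n)]
    (M : ∀ i j : ℕ, (ℕ → Bool) → (Φ i →ₗ[K] Φ j))
    (hdep : ∀ i j, i < j → j ≤ r + 1 → ∀ ε ε' : ℕ → Bool,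
      (∀ k, i < k → k < j → ε k = ε' k) → M i j ε = M i j ε')
    (hPL : ∀ i k j, i < k → k < j → j ≤ r + 1 → ∀ ε : ℕ → Bool, ε k = true →
      M i j (Function.update ε k false) = M i j ε + (M k j ε).comp (M i k ε)) :
    ∀ (n i j : ℕ) (ε : ℕ → Bool), i < j → j ≤ r + 1 →
      ((Finset.Icc 1 r).filter (fun k => i < k ∧ k < j ∧ ε k = false)).card ≤ n →
      M i j ε = ∑ S ∈ ((Finset.Icc 1 r).filter
          (fun k => i < k ∧ k < j ∧ ε k = false)).powerset,
        chainComp M true j i (S.sort (· ≤ ·)) := by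
  intro n
  induction n with
  | zero =>
    intro i j ε hij hjr hcard
    have hF : ((Finset.Icc 1 r).filter (fun k => i < k ∧ k < j ∧ ε k = false)) = ∅ :=
      Finset.card_eq_zero.1 (Nat.le_zero.1 hcard)
    rw [hF]
    simp only [Finset.powerset_empty, Finset.sum_singleton, Finset.sort_empty]
    show M i j ε = M i j (fun _ => true)
    apply hdep i j hij hjr
    intro k hik hkj
    by_contra h
    have hk : ε k = false := by revert h; cases ε k <;> simp
    have : k ∈ ((Finset.Icc 1 r).filter (fun k => i < k ∧ k < j ∧ ε k = false)) := by
      simp only [Finset.mem_filter, Finset.mem_Icc]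
      exact ⟨⟨by omega, by omega⟩, hik, hkj, hk⟩
    rw [hF] at this
    exact absurd this (Finset.notMem_empty k)
  | succ n ih =>
    intro i j ε hij hjr hcard
    set F := ((Finset.Icc 1 r).filter (fun k => i < k ∧ k < j ∧ ε k = false)) with hFdef
    rcases eq_or_ne F ∅ with hF | hF
    · -- same as base case
      rw [hF]
      simp only [Finset.powerset_empty, Finset.sum_singleton, Finset.sort_empty]
      show M i j ε = M i j (fun _ => true)
      apply hdep i j hij hjr
      intro k hik hkj
      by_contra h
      have hk : ε k = false := by revert h; cases ε k <;> simp
      have : k ∈ F := by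
        simp only [hFdef, Finset.mem_filter, Finset.mem_Icc]
        exact ⟨⟨by omega, by omega⟩, hik, hkj, hk⟩
      rw [hF] at this
      exact absurd this (Finset.notMem_empty k)
    · have hne : F.Nonempty := Finset.nonempty_iff_ne_empty.2 hF
      set k := F.min' hne with hkdef
      have hkF : k ∈ F := F.min'_mem hne
      have hkmin : ∀ l ∈ F, k ≤ l := fun l hl => F.min'_le l hl
      have hkprops := hkF
      rw [hFdef, Finset.mem_filter, Finset.mem_Icc] at hkprops
      obtain ⟨⟨hk1, hkr⟩, hik, hkj, hεk⟩ := hkprops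
      set ε' := Function.update ε k true with hε'def
      have hε'app : ∀ l, ε' l = if l = k then true else ε l := fun l =>
        Function.update_apply ε k true l
      have hups : Function.update ε' k false = ε := by
        rw [hε'def, Function.update_idem, ← hεk, Function.update_eq_self]
      have hPL' := hPL i k j hik hkj hjr ε' (by simp [hε'def])
      rw [hups] at hPL'
      -- the filters for ε'
      have hF1 : ((Finset.Icc 1 r).filter (fun l => i < l ∧ l < j ∧ ε' l = false))
          = F.erase k := by
        ext l
        simp only [hFdef, Finset.mem_filter, Finset.mem_erase, hε'app]
        rcases eq_or_ne l k with h | h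
        · subst h; simp
        · simp [h]
      have hF2 : ((Finset.Icc 1 r).filter (fun l => k < l ∧ l < j ∧ ε' l = false))
          = F.erase k := by
        ext l
        simp only [hFdef, Finset.mem_filter, Finset.mem_erase, hε'app]
        rcases eq_or_ne l k with h | h
        · subst h; simp
        · simp only [h, if_neg h, ne_eq, not_false_eq_true, true_and]
          constructor
          · rintro ⟨hIcc, hkl, hlj, hεl⟩
            exact ⟨hIcc, lt_trans hik hkl, hlj, hεl⟩
          · rintro ⟨hIcc, hil, hlj, hεl⟩
            have : l ∈ F := by
              rw [hFdef]; exact Finset.mem_filter.2 ⟨hIcc, hil, hlj, hεl⟩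
            have := hkmin l this
            exact ⟨hIcc, lt_of_le_of_ne this (Ne.symm h), hlj, hεl⟩
      have hMik : M i k ε' = M i k (fun _ => true) := by
        apply hdep i k hik (by omega)
        intro l hil hlk
        rw [hε'app, if_neg (by omega)]
        by_contra h
        have hl : ε l = false := by revert h; cases ε l <;> simp
        have : l ∈ F := by
          rw [hFdef]
          simp only [Finset.mem_filter, Finset.mem_Icc]
          exact ⟨⟨by omega, by omega⟩, hil, by omega, hl⟩
        have := hkmin l this
        omega
      have hcard' : (F.erase k).card ≤ n := by
        rw [Finset.card_erase_of_mem hkF]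
        omega
      have hIH1 := ih i j ε' hij hjr (by rw [hF1]; exact hcard')
      rw [hF1] at hIH1
      have hIH2 := ih k j ε' hkj hjr (by rw [hF2]; exact hcard')
      rw [hF2] at hIH2
      rw [hPL', hIH1, hIH2, hMik]
      have hFins : F = insert k (F.erase k) := (Finset.insert_erase hkF).symm
      conv_rhs => rw [hFins]
      rw [Finset.sum_powerset_insert (Finset.notMem_erase k F)]
      congr 1
      have hcomp : ((∑ S ∈ (F.erase k).powerset,
            chainComp M true j k (S.sort (· ≤ ·))) ∘ₗ (M i k fun _ => true))
          = ∑ S ∈ (F.erase k).powerset,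
            ((chainComp M true j k (S.sort (· ≤ ·))) ∘ₗ (M i k fun _ => true)) := by
        ext x
        simp [LinearMap.sum_apply]
      rw [hcomp]
      refine Finset.sum_congr rfl fun S hS => ?_
      rw [Finset.mem_powerset] at hS
      have hsort : (insert k S).sort (· ≤ ·) = k :: S.sort (· ≤ ·) := by
        apply Finset.sort_insert
        · intro b hb
          have hbF := hS hb
          rw [Finset.mem_erase] at hbF
          exact hkmin b hbF.2
        · intro hkS
          exact (Finset.mem_erase.1 (hS hkS)).1 rfl
      rw [hsort]
      rfl
/-- Écalle-type expression (Kapranov–Soibelman): over a field of characteristic zero,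
`∑_{s=0}^{r} 1/(s+1) ∑_{1 ≤ i₁ < ⋯ < i_s ≤ r} M⁺(i_s, r+1) ∘ ⋯ ∘ M⁺(0, i₁)
  = ∑_{ε ∈ {+,-}^r} (|+(ε)|! · |−(ε)|! / (r+1)!) · m^ε`,
where the sum over chains is encoded as a sum over subsets `S ⊆ {1,…,r}` (sorted
increasingly), and a sign pattern `ε ∈ {+,-}^r` is encoded by the subset `P ⊆ {1,…,r}`
of its `+`-entries (`true` = `+`, `false` = `-`).  `hdep` says that `M i j ε` only
depends on the values of `ε` on `{k | i < k < j}`, and `hPL` is the Picard–Lefschetz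
relation. -/
theorem alien_transport_plus_chains_eq_convex_combination
    {K : Type*} [Field K] [CharZero K] (r : ℕ) (Φ : ℕ → Type*)
    [∀ n, AddCommGroup (Φ n)] [∀ n, Module K (Φ n)]
    (M : ∀ i j : ℕ, (ℕ → Bool) → (Φ i →ₗ[K] Φ j))
    (hdep : ∀ i j, i < j → j ≤ r + 1 → ∀ ε ε' : ℕ → Bool,
      (∀ k, i < k → k < j → ε k = ε' k) → M i j ε = M i j ε')
    (hPL : ∀ i k j, i < k → k < j → j ≤ r + 1 → ∀ ε : ℕ → Bool, ε k = true →
      M i j (Function.update ε k false) = M i j ε + (M k j ε).comp (M i k ε)) :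
    ∑ S ∈ (Finset.Icc 1 r).powerset,
        (((S.card : K) + 1)⁻¹) • chainComp M true (r + 1) 0 (S.sort (· ≤ ·)) =
      ∑ P ∈ (Finset.Icc 1 r).powerset,
        (((P.card.factorial : K) * ((r - P.card).factorial : K)) / ((r + 1).factorial : K)) •
          M 0 (r + 1) (fun k => decide (k ∈ P)) := by
  classical
  have hcardIcc : (Finset.Icc 1 r).card = r := by
    rw [Nat.card_Icc]; omega
  -- expansion of each mixed-sign transport into all-plus chains
  have hexp : ∀ P ∈ (Finset.Icc 1 r).powerset,
      M 0 (r + 1) (fun k => decide (k ∈ P))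
        = ∑ S ∈ (Finset.Icc 1 r \ P).powerset,
            chainComp M true (r + 1) 0 (S.sort (· ≤ ·)) := by
    intro P hP
    have hfilter : ((Finset.Icc 1 r).filter
          (fun k => 0 < k ∧ k < r + 1 ∧ (fun k => decide (k ∈ P)) k = false))
        = Finset.Icc 1 r \ P := by
      ext l
      simp only [Finset.mem_filter, Finset.mem_sdiff, Finset.mem_Icc,
        decide_eq_false_iff_not]
      constructor
      · rintro ⟨h1, _, _, h4⟩; exact ⟨h1, h4⟩
      · rintro ⟨⟨h1, h2⟩, h3⟩; exact ⟨⟨h1, h2⟩, by omega, by omega, h3⟩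
    have h := ks_expand r M hdep hPL r 0 (r + 1) (fun k => decide (k ∈ P))
      (by omega) le_rfl (by
        rw [hfilter]
        calc (Finset.Icc 1 r \ P).card ≤ (Finset.Icc 1 r).card :=
              Finset.card_le_card Finset.sdiff_subset
          _ = r := hcardIcc)
    rw [hfilter] at h
    exact h
  -- rewrite the RHS and swap the two sums
  have step1 : ∑ P ∈ (Finset.Icc 1 r).powerset,
        (((P.card.factorial : K) * ((r - P.card).factorial : K)) / ((r + 1).factorial : K)) •
          M 0 (r + 1) (fun k => decide (k ∈ P))
      = ∑ P ∈ (Finset.Icc 1 r).powerset, ∑ S ∈ (Finset.Icc 1 r \ P).powerset,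
          (((P.card.factorial : K) * ((r - P.card).factorial : K)) / ((r + 1).factorial : K)) •
            chainComp M true (r + 1) 0 (S.sort (· ≤ ·)) := by
    refine Finset.sum_congr rfl fun P hP => ?_
    rw [hexp P hP, Finset.smul_sum]
  have step2 : ∑ P ∈ (Finset.Icc 1 r).powerset, ∑ S ∈ (Finset.Icc 1 r \ P).powerset,
          (((P.card.factorial : K) * ((r - P.card).factorial : K)) / ((r + 1).factorial : K)) •
            chainComp M true (r + 1) 0 (S.sort (· ≤ ·))
      = ∑ S ∈ (Finset.Icc 1 r).powerset, ∑ P ∈ (Finset.Icc 1 r \ S).powerset,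
          (((P.card.factorial : K) * ((r - P.card).factorial : K)) / ((r + 1).factorial : K)) •
            chainComp M true (r + 1) 0 (S.sort (· ≤ ·)) := by
    apply Finset.sum_comm'
    intro P S
    simp only [Finset.mem_powerset, Finset.subset_sdiff]
    constructor
    · rintro ⟨h1, h2, h3⟩; exact ⟨⟨h1, h3.symm⟩, h2⟩
    · rintro ⟨⟨h1, h3⟩, h2⟩; exact ⟨h1, h2, h3.symm⟩
  rw [step1, step2]
  refine Finset.sum_congr rfl fun S hS => ?_
  rw [Finset.mem_powerset] at hS
  rw [← Finset.sum_smul]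
  congr 1
  refine (ks_key_field (K := K) r S.card ?_ (Finset.Icc 1 r \ S) ?_).symm
  · calc S.card ≤ (Finset.Icc 1 r).card := Finset.card_le_card hS
      _ = r := hcardIcc
  · rw [Finset.card_sdiff_of_subset hS, hcardIcc]
end

section
/- As linear maps Φ_0 → Φ_{r+1}, the all-left-avoiding transport expands as a sum over chains of all-right-avoiding transports: M⁻(0, r+1) = ∑_{s=0}^{r} ∑_{1 ≤ i_1 < i_2 < ⋯ < i_s ≤ r} M⁺(i_s, r+1) ∘ M⁺(i_{s−1}, i_s) ∘ ⋯ ∘ M⁺(0, i_1), where the s = 0 term of the right-hand side is M⁺(0, r+1). -/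
/-- Picard–Lefschetz expansion of the all-left-avoiding transport in terms of chains of
all-right-avoiding transports:
`M⁻(0, r+1) = ∑_{s=0}^{r} ∑_{1 ≤ i₁ < ⋯ < i_s ≤ r} M⁺(i_s, r+1) ∘ ⋯ ∘ M⁺(0, i₁)`.
Here a sign pattern for the pair `(i,j)` is encoded as a function `ℕ → Bool` whose values
on `{k | i < k < j}` are the only relevant ones (`true` = `+`, `false` = `-`), `hdep`
expresses this independence, and `hPL` is the Picard–Lefschetz relation. -/
theorem left_avoid_eq_sum_right_chains {K : Type*} [Field K] (r : ℕ) (Φ : ℕ → Type*)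
    [∀ n, AddCommGroup (Φ n)] [∀ n, Module K (Φ n)]
    (M : ∀ i j : ℕ, (ℕ → Bool) → (Φ i →ₗ[K] Φ j))
    (hdep : ∀ i j, i < j → j ≤ r + 1 → ∀ ε ε' : ℕ → Bool,
      (∀ k, i < k → k < j → ε k = ε' k) → M i j ε = M i j ε')
    (hPL : ∀ i k j, i < k → k < j → j ≤ r + 1 → ∀ ε : ℕ → Bool, ε k = true →
      M i j (Function.update ε k false) = M i j ε + (M k j ε).comp (M i k ε)) :
    M 0 (r + 1) (fun _ => false) =
      ∑ S ∈ (Finset.Icc 1 r).powerset,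
        chainComp M true (r + 1) 0 (S.sort (· ≤ ·)) := by
  have key : ∀ n i j, i < j → j ≤ r + 1 → (r + 1 - i) + (r + 1 - j) ≤ n →
      M i (r + 1) (fun k => decide (k < j)) =
        ∑ S ∈ (Finset.Icc j r).powerset,
          chainComp M true (r + 1) i (S.sort (· ≤ ·)) := by
    intro n
    induction n with
    | zero => intro i j hij hj hn; omega
    | succ n ih =>
      intro i j hij hj hn
      rcases eq_or_lt_of_le hj with hjr | hjr
      · -- base case j = r + 1
        have hempty : Finset.Icc j r = ∅ := Finset.Icc_eq_empty (by omega)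
        rw [hempty, Finset.powerset_empty, Finset.sum_singleton]
        rw [Finset.sort_empty]
        show M i (r + 1) _ = M i (r + 1) _
        exact hdep i (r + 1) (by omega) le_rfl _ _ (by
          intro k hk hk'; simp; omega)
      · -- inductive step: j ≤ r
        have hjle : j ≤ r := by omega
        set ε : ℕ → Bool := fun k => decide (k < j + 1) with hε
        have hupd : (fun k => decide (k < j)) = Function.update ε j false := by
          funext k
          rcases eq_or_ne k j with rfl | hkj
          · simp [Function.update]
          · simp [Function.update, hkj, hε]; omega
        rw [hupd, hPL i j (r + 1) hij (by omega) le_rfl ε (by simp [hε])]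
        -- rewrite the three pieces
        have h1 : M i (r + 1) ε =
            ∑ S ∈ (Finset.Icc (j + 1) r).powerset,
              chainComp M true (r + 1) i (S.sort (· ≤ ·)) :=
          ih i (j + 1) (by omega) (by omega) (by omega)
        have h2 : M j (r + 1) ε =
            ∑ S ∈ (Finset.Icc (j + 1) r).powerset,
              chainComp M true (r + 1) j (S.sort (· ≤ ·)) :=
          ih j (j + 1) (by omega) (by omega) (by omega)
        have h3 : M i j ε = M i j (fun _ => true) :=
          hdep i j hij (by omega) _ _ (by intro k hk hk'; simp [hε]; omega)
        rw [h1, h2, h3]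
        -- now the right-hand side
        have hins : Finset.Icc j r = insert j (Finset.Icc (j + 1) r) := by
          ext x; simp [Finset.mem_Icc]; omega
        have hnot : j ∉ Finset.Icc (j + 1) r := by simp
        rw [hins, Finset.sum_powerset_insert hnot]
        congr 1
        have hterm : ∀ S ∈ (Finset.Icc (j + 1) r).powerset,
            chainComp M true (r + 1) i ((insert j S).sort (· ≤ ·)) =
              (chainComp M true (r + 1) j (S.sort (· ≤ ·))).comp
                (M i j fun _ => true) := by
          intro S hS
          rw [Finset.mem_powerset] at hS
          have hjS : j ∉ S := fun h => by simpa using hS h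
          have hsort : (insert j S).sort (· ≤ ·) = j :: S.sort (· ≤ ·) :=
            Finset.sort_insert _ (fun b hb => by
              have := hS hb; rw [Finset.mem_Icc] at this; omega) hjS
          rw [hsort]
          rfl
        rw [Finset.sum_congr rfl hterm]
        ext x
        simp [LinearMap.sum_apply]
  have h0 : M 0 (r + 1) (fun _ => false) = M 0 (r + 1) (fun k => decide (k < 1)) :=
    hdep 0 (r + 1) (by omega) le_rfl _ _ (by intro k hk hk'; simp; omega)
  rw [h0]
  exact key (2 * (r + 1)) 0 1 (by omega) (by omega) (by omega)
end

section
/- As linear maps Φ_0 → Φ_{r+1}, one has M⁻(0, r+1) = M⁺(0, r+1) + ∑_{i=1}^{r} M⁺(i, r+1) ∘ M⁻(0, i). -/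
/-- Picard–Lefschetz consequence:
`M⁻(0, r+1) = M⁺(0, r+1) + ∑_{i=1}^{r} M⁺(i, r+1) ∘ M⁻(0, i)`.
Here a sign pattern for the pair `(i,j)` is encoded as a function `ℕ → Bool` whose values
on `{k | i < k < j}` are the only relevant ones (`true` = `+`, `false` = `-`), `hdep`
expresses this independence, and `hPL` is the Picard–Lefschetz relation. -/
theorem left_avoid_eq_right_avoid_add_sum {K : Type*} [Field K] (r : ℕ) (Φ : ℕ → Type*)
    [∀ n, AddCommGroup (Φ n)] [∀ n, Module K (Φ n)]
    (M : ∀ i j : ℕ, (ℕ → Bool) → (Φ i →ₗ[K] Φ j))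
    (hdep : ∀ i j, i < j → j ≤ r + 1 → ∀ ε ε' : ℕ → Bool,
      (∀ k, i < k → k < j → ε k = ε' k) → M i j ε = M i j ε')
    (hPL : ∀ i k j, i < k → k < j → j ≤ r + 1 → ∀ ε : ℕ → Bool, ε k = true →
      M i j (Function.update ε k false) = M i j ε + (M k j ε).comp (M i k ε)) :
    M 0 (r + 1) (fun _ => false) =
      M 0 (r + 1) (fun _ => true) +
        ∑ i ∈ Finset.Icc 1 r,
          (M i (r + 1) (fun _ => true)).comp (M 0 i (fun _ => false)) := by
  have key : ∀ t, t ≤ r →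
      M 0 (r + 1) (fun k => decide (t < k)) =
        M 0 (r + 1) (fun _ => true) +
          ∑ i ∈ Finset.Icc 1 t,
            (M i (r + 1) (fun _ => true)).comp (M 0 i (fun _ => false)) := by
    intro t
    induction t with
    | zero =>
      intro _
      rw [show Finset.Icc 1 0 = ∅ from rfl, Finset.sum_empty, add_zero]
      apply hdep 0 (r + 1) (Nat.succ_pos r) le_rfl
      intro k hk _
      simp [hk]
    | succ t ih =>
      intro ht
      have ht' : t ≤ r := Nat.le_of_succ_le ht
      have hfun : (fun k => decide (t + 1 < k)) =
          Function.update (fun k => decide (t < k)) (t + 1) false := by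
        funext k
        rcases eq_or_ne k (t + 1) with h | h
        · subst h; simp
        · rw [Function.update_of_ne h]
          simp only [decide_eq_decide]
          omega
      rw [hfun, hPL 0 (t + 1) (r + 1) (Nat.succ_pos t) (by omega) le_rfl _ (by simp),
        ih ht', Finset.sum_Icc_succ_top (by omega : (1:ℕ) ≤ t + 1), add_assoc]
      congr 1
      have h1 : M (t + 1) (r + 1) (fun k => decide (t < k)) =
          M (t + 1) (r + 1) (fun _ => true) := by
        apply hdep _ _ (by omega) le_rfl
        intro k hk _
        simp; omega
      have h2 : M 0 (t + 1) (fun k => decide (t < k)) =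
          M 0 (t + 1) (fun _ => false) := by
        apply hdep _ _ (by omega) (by omega)
        intro k _ hk
        simp; omega
      rw [h1, h2]
  have := key r le_rfl
  rw [← this]
  apply hdep 0 (r + 1) (Nat.succ_pos r) le_rfl
  intro k _ hk
  simp; omega
end

section
/- As linear maps Φ_0 → Φ_{r+1}, the composition of the consecutive (adjacent) transports equals the signed sum of all transports with avoidances: M(r, r+1, ∅) ∘ M(r−1, r, ∅) ∘ ⋯ ∘ M(0, 1, ∅) = ∑_{ε ∈ {+,−}^r} (−1)^{|+(ε)|} · m^ε, where ∅ denotes the (unique, empty) sign pattern for a pair of consecutive indices. -/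
/-- The composite `M(n-1, n, ∅) ∘ ⋯ ∘ M(1, 2, ∅) ∘ M(0, 1, ∅)` of the consecutive
(adjacent) transports; for consecutive indices the sign pattern is irrelevant (the open
interval between them is empty), so we use the constant pattern. -/
def adjComp {K : Type*} [Field K] {Φ : ℕ → Type*}
    [∀ n, AddCommGroup (Φ n)] [∀ n, Module K (Φ n)]
    (M : ∀ i j : ℕ, (ℕ → Bool) → (Φ i →ₗ[K] Φ j)) : (n : ℕ) → (Φ 0 →ₗ[K] Φ n)
  | 0 => LinearMap.id
  | n + 1 => (M n (n + 1) (fun _ => true)).comp (adjComp M n)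

/-- The composition of the consecutive transports equals the signed sum of all transports
with avoidances:
`M(r, r+1, ∅) ∘ ⋯ ∘ M(0, 1, ∅) = ∑_{ε ∈ {+,-}^r} (-1)^{|+(ε)|} · m^ε`.
A sign pattern `ε ∈ {+,-}^r` is encoded by the subset `P ⊆ {1,…,r}` of its `+`-entries
(`true` = `+`, `false` = `-`); `hdep` says that `M i j ε` only depends on the values of
`ε` on `{k | i < k < j}`, and `hPL` is the Picard–Lefschetz relation. -/
theorem adjacent_composition_eq_signed_sum {K : Type*} [Field K] (r : ℕ) (Φ : ℕ → Type*)
    [∀ n, AddCommGroup (Φ n)] [∀ n, Module K (Φ n)]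
    (M : ∀ i j : ℕ, (ℕ → Bool) → (Φ i →ₗ[K] Φ j))
    (hdep : ∀ i j, i < j → j ≤ r + 1 → ∀ ε ε' : ℕ → Bool,
      (∀ k, i < k → k < j → ε k = ε' k) → M i j ε = M i j ε')
    (hPL : ∀ i k j, i < k → k < j → j ≤ r + 1 → ∀ ε : ℕ → Bool, ε k = true →
      M i j (Function.update ε k false) = M i j ε + (M k j ε).comp (M i k ε)) :
    adjComp M (r + 1) =
      ∑ P ∈ (Finset.Icc 1 r).powerset,
        ((-1 : K) ^ P.card) • M 0 (r + 1) (fun k => decide (k ∈ P)) := by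
  suffices h : ∀ n, n ≤ r → adjComp M (n+1) =
      ∑ P ∈ (Finset.Icc 1 n).powerset,
        ((-1 : K) ^ P.card) • M 0 (n + 1) (fun k => decide (k ∈ P)) from h r le_rfl
  intro n
  induction n with
  | zero =>
      intro _
      rw [show Finset.Icc 1 0 = (∅ : Finset ℕ) from rfl]
      simp only [Finset.powerset_empty, Finset.sum_singleton, Finset.card_empty, pow_zero,
        one_smul]
      show (M 0 1 (fun _ => true)).comp LinearMap.id = _
      rw [LinearMap.comp_id]
      exact hdep 0 1 one_pos (by omega) _ _ (fun k hk hk' => by omega)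
  | succ n ih =>
      intro hn
      have hle : n ≤ r := Nat.le_of_succ_le hn
      have hnotmem : (n + 1) ∉ Finset.Icc 1 n := by simp
      rw [← Finset.insert_Icc_right_eq_Icc_add_one (by omega), Finset.sum_powerset_insert hnotmem]
      show (M (n+1) (n+2) (fun _ => true)).comp (adjComp M (n+1)) = _
      rw [ih hle]
      have key : ∀ P ∈ (Finset.Icc 1 n).powerset,
          ((-1 : K) ^ P.card) • M 0 (n+2) (fun k => decide (k ∈ P)) +
            ((-1 : K) ^ (insert (n+1) P).card) •
              M 0 (n+2) (fun k => decide (k ∈ insert (n+1) P)) =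
          ((-1 : K) ^ P.card) •
            ((M (n+1) (n+2) (fun _ => true)).comp
              (M 0 (n+1) (fun k => decide (k ∈ P)))) := by
        intro P hP
        have hPsub : P ⊆ Finset.Icc 1 n := Finset.mem_powerset.mp hP
        have hPn : (n + 1) ∉ P := fun h => hnotmem (hPsub h)
        have hcard : (insert (n+1) P).card = P.card + 1 := Finset.card_insert_of_notMem hPn
        set ε : ℕ → Bool := fun k => decide (k ∈ insert (n+1) P) with hε
        have hεtrue : ε (n+1) = true := by simp [hε]
        have hupd : Function.update ε (n+1) false = fun k => decide (k ∈ P) := by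
          funext k
          by_cases hk : k = n + 1
          · subst hk; simp [Function.update, hPn]
          · simp [Function.update, hk, hε, Finset.mem_insert]
        have hPL' := hPL 0 (n+1) (n+2) (by omega) (by omega) (by omega) ε hεtrue
        rw [hupd] at hPL'
        have h1 : M (n+1) (n+2) ε = M (n+1) (n+2) (fun _ => true) :=
          hdep (n+1) (n+2) (by omega) (by omega) _ _ (fun k hk hk' => by omega)
        have h2 : M 0 (n+1) ε = M 0 (n+1) (fun k => decide (k ∈ P)) := by
          refine hdep 0 (n+1) (by omega) (by omega) _ _ (fun k hk hk' => ?_)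
          have hkne : k ≠ n + 1 := by omega
          simp [hε, Finset.mem_insert, hkne]
        rw [hcard, pow_succ, mul_comm, neg_one_mul, neg_smul, hPL', h1, h2]
        rw [smul_add]
        abel
      rw [← Finset.sum_add_distrib, Finset.sum_congr rfl key]
      ext x
      simp [LinearMap.sum_apply, map_sum, map_smul]
end

section
/- Let a, b : ℕ → ℂ be sequences and f, g : ℂ → ℂ functions such that for every w ∈ ℂ the series ∑_{n≥0} a_n · w^n / n! converges with sum f(w) and the series ∑_{n≥0} b_n · w^n / n! converges with sum g(w). Then for every w ∈ ℂ, the series ∑_{n≥0} (∑_{i+j=n} a_i · b_j) · w^{n+1} / (n+1)! converges, and its sum equals the Hurwitz (additive) convolution (f ∗ g)(w) = ∫_0^w f(u) · g(w − u) du, i.e., equals w · ∫_0^1 f(t·w) · g((1 − t)·w) dt. -/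
/-!
Expanding `f (t w) g ((1 - t) w)` as the Cauchy product of the two absolutely convergent series
gives a double series whose `(i, j)` term is bounded on `[0, 1]` by
`‖a_i w^i / i!‖ ‖b_j w^j / j!‖`, a summable family; so the series may be integrated termwise.
The Beta integral `∫₀¹ t^i (1 - t)^j dt = i! j! / (i + j + 1)!` turns the `(i, j)` term into
`a_i b_j w^(i+j) / (i + j + 1)!`, and grouping the terms along the antidiagonals `i + j = n`
gives the series of the theorem.
-/

open MeasureTheory Finset

theorem HasSum.sum_antidiagonal {α A : Type*} [AddCommMonoid α] [TopologicalSpace α]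
    [ContinuousAdd α] [RegularSpace α] [AddCommMonoid A] [HasAntidiagonal A]
    {F : A × A → α} {s : α} (h : HasSum F s) :
    HasSum (fun n => ∑ p ∈ antidiagonal n, F p) s :=
  (HasAntidiagonal.sigmaAntidiagonalEquivProd.hasSum_iff.2 h).sigma fun n => by
    rw [← sum_coe_sort]; exact hasSum_fintype _

theorem integral_ofReal_pow_mul_one_sub_pow (i j : ℕ) :
    ∫ t in (0 : ℝ)..1, (t : ℂ) ^ i * (1 - (t : ℂ)) ^ j =
      (i.factorial * j.factorial : ℂ) / ((i + j + 1).factorial : ℂ) := by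
  have hi : 0 < ((i : ℂ) + 1).re := by norm_cast; positivity
  have hj : 0 < ((j : ℂ) + 1).re := by norm_cast; positivity
  have hB := Complex.Gamma_mul_Gamma_eq_betaIntegral hi hj
  have hsum : ((i : ℂ) + 1) + ((j : ℂ) + 1) = ((i + j + 1 : ℕ) : ℂ) + 1 := by push_cast; ring
  simp only [Complex.betaIntegral, add_sub_cancel_right, Complex.cpow_natCast, hsum,
    Complex.Gamma_nat_eq_factorial] at hB
  rw [eq_div_iff (Nat.cast_ne_zero.2 (Nat.factorial_ne_zero _))]
  linear_combination -hB

noncomputable def egfTerm (a : ℕ → ℂ) (w : ℂ) (n : ℕ) : ℂ :=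
  a n * w ^ n / n.factorial

theorem norm_egfTerm_mul_le {c : ℂ} (hc : ‖c‖ ≤ 1) (a : ℕ → ℂ) (w : ℂ) (n : ℕ) :
    ‖egfTerm a (c * w) n‖ ≤ ‖egfTerm a w n‖ := by
  simp only [egfTerm, mul_pow, norm_mul, norm_div, norm_pow]
  gcongr
  calc ‖c‖ ^ n * ‖w‖ ^ n ≤ 1 * ‖w‖ ^ n := by gcongr; exact pow_le_one₀ (norm_nonneg c) hc
    _ = ‖w‖ ^ n := one_mul _

theorem integral_egfTerm_mul_egfTerm (a b : ℕ → ℂ) (w : ℂ) (i j : ℕ) :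
    ∫ t in (0 : ℝ)..1, egfTerm a (t * w) i * egfTerm b ((1 - t) * w) j =
      a i * b j * w ^ (i + j) / (i + j + 1).factorial := by
  have hterm : ∀ t : ℝ, egfTerm a (t * w) i * egfTerm b ((1 - t) * w) j =
      a i * b j * w ^ (i + j) / (i.factorial * j.factorial) * ((t : ℂ) ^ i * (1 - (t : ℂ)) ^ j) := by
    intro t
    simp only [egfTerm, mul_pow, pow_add]
    field_simp
  have hi : (i.factorial : ℂ) ≠ 0 := Nat.cast_ne_zero.2 (Nat.factorial_ne_zero _)
  have hj : (j.factorial : ℂ) ≠ 0 := Nat.cast_ne_zero.2 (Nat.factorial_ne_zero _)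
  simp only [hterm, intervalIntegral.integral_const_mul, integral_ofReal_pow_mul_one_sub_pow]
  field_simp

theorem hasSum_egfTerm_mul_egfTerm {a b : ℕ → ℂ} {x y fx gy : ℂ}
    (hf : HasSum (egfTerm a x) fx) (hg : HasSum (egfTerm b y) gy) :
    HasSum (fun p : ℕ × ℕ => egfTerm a x p.1 * egfTerm b y p.2) (fx * gy) :=
  hf.mul hg <| summable_mul_of_summable_norm (summable_norm_iff.2 hf.summable)
    (summable_norm_iff.2 hg.summable)

theorem hasSum_integral_egfTerm_mul_egfTerm {a b : ℕ → ℂ} {f g : ℂ → ℂ}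
    (hf : ∀ w, HasSum (egfTerm a w) (f w)) (hg : ∀ w, HasSum (egfTerm b w) (g w)) (w : ℂ) :
    HasSum (fun p : ℕ × ℕ => a p.1 * b p.2 * w ^ (p.1 + p.2) / (p.1 + p.2 + 1).factorial)
      (∫ t in (0 : ℝ)..1, f (t * w) * g ((1 - t) * w)) := by
  have hdominated := intervalIntegral.hasSum_integral_of_dominated_convergence
    (μ := volume) (a := 0) (b := 1)
    (F := fun (p : ℕ × ℕ) (t : ℝ) => egfTerm a (t * w) p.1 * egfTerm b ((1 - t) * w) p.2)
    (f := fun t : ℝ => f (t * w) * g ((1 - t) * w))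
    (fun p _ => ‖egfTerm a w p.1‖ * ‖egfTerm b w p.2‖)
    (fun p => by unfold egfTerm; fun_prop) ?bound ?summable intervalIntegrable_const
    (.of_forall fun t _ => hasSum_egfTerm_mul_egfTerm (hf _) (hg _))
  · simpa only [integral_egfTerm_mul_egfTerm] using hdominated
  case bound =>
    refine fun p => .of_forall fun t ht => ?_
    rw [Set.uIoc_of_le zero_le_one] at ht
    have ht₁ : ‖(t : ℂ)‖ ≤ 1 := by
      rw [Complex.norm_real, Real.norm_of_nonneg ht.1.le]; exact ht.2
    have ht₂ : ‖1 - (t : ℂ)‖ ≤ 1 := by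
      rw [← Complex.ofReal_one, ← Complex.ofReal_sub, Complex.norm_real,
        Real.norm_of_nonneg (by linarith [ht.2])]; linarith [ht.1]
    rw [norm_mul]
    exact mul_le_mul (norm_egfTerm_mul_le ht₁ a w p.1) (norm_egfTerm_mul_le ht₂ b w p.2)
      (norm_nonneg _) (norm_nonneg _)
  case summable =>
    exact .of_forall fun _ _ => (summable_norm_iff.2 (hf w).summable).mul_of_nonneg
      (summable_norm_iff.2 (hg w).summable) (fun _ => norm_nonneg _) (fun _ => norm_nonneg _)

/-- Hurwitz's additive convolution at the level of Taylor coefficients: if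
`f(w) = ∑ a_n w^n/n!` and `g(w) = ∑ b_n w^n/n!` (convergent for every `w ∈ ℂ`), then for
every `w` the series `∑_n (∑_{i+j=n} a_i b_j) w^{n+1}/(n+1)!` converges with sum equal to
the Hurwitz convolution `(f ∗ g)(w) = ∫₀^w f(u) g(w-u) du = w ∫₀¹ f(tw) g((1-t)w) dt`. -/
theorem hurwitz_convolution_series (a b : ℕ → ℂ) (f g : ℂ → ℂ)
    (hf : ∀ w : ℂ, HasSum (fun n : ℕ => a n * w ^ n / (n.factorial : ℂ)) (f w))
    (hg : ∀ w : ℂ, HasSum (fun n : ℕ => b n * w ^ n / (n.factorial : ℂ)) (g w))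
    (w : ℂ) :
    HasSum
      (fun n : ℕ =>
        (∑ p ∈ Finset.HasAntidiagonal.antidiagonal n, a p.1 * b p.2) * w ^ (n + 1) / ((n + 1).factorial : ℂ))
      (w * ∫ t in (0 : ℝ)..1, f ((t : ℂ) * w) * g ((1 - (t : ℂ)) * w)) := by
  refine ((hasSum_integral_egfTerm_mul_egfTerm hf hg w).mul_left w).sum_antidiagonal.congr_fun
    fun n => ?_
  rw [sum_mul, sum_div]
  refine sum_congr rfl fun p hp => ?_
  rw [mem_antidiagonal.1 hp, pow_succ]
  ring
end
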